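/- Let a, b > -1, c ≥ 0, and define the sequence (u_k) by u_0 = 1 and u_k = (1/(2c+a+b+k+1))·((a+k) u_{k-1} + c Σ_{i=0}^{k-1} u_i u_{k-1-i} - c Σ_{j=1}^{k-1} u_j u_{k-j}) for k ≥ 1. Then 0 < u_k ≤ 1 for all k, and the sequence (u_k) is non-increasing. -/

import Mathlib

/-!
Work with the generating function `U = ∑ uₙ Xⁿ`, write `sₙ` for the coefficients of `U²` and
`dₙ = uₙ - uₙ₊₁`. The two convolution sums of the recurrence are `s_{k-1}` and `s_k - 2 u_k`, so
it reads `(a + b + k + 1) u_k = (a + k) u_{k-1} + c (s_{k-1} - s_k)`. Since `u₀ = 1`, the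
generating function `D` of `d` satisfies `X D = (X - 1) U + 1`; this expresses the coefficients
of `D²` and `D U` through `s` and `u`, and turns the recurrence into
`(2c + a + b + n + 3) dₙ₊₁ = (a + n + 1) dₙ + c [D²]ₙ` and
`(a + b + c + n + 2) uₙ₊₁ = (a + n + 1) uₙ + c [D U]ₙ`.
All coefficients on the right are nonnegative, so strong induction gives first `dₙ ≥ 0` and then
`uₙ > 0`.
-/

open PowerSeries Finset

namespace PowerSeries

section CommRing

variable {R : Type*} [CommRing R] (u : ℕ → R)

theorem coeff_mk_sq (n : ℕ) : coeff n (mk u ^ 2) = ∑ i ∈ range (n + 1), u i * u (n - i) := by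
  rw [sq, coeff_mul,
    Nat.sum_antidiagonal_eq_sum_range_succ (fun i j ↦ coeff i (mk u) * coeff j (mk u))]
  simp only [coeff_mk]

theorem sum_Icc_mul_eq_coeff_mk_sq (n : ℕ) :
    ∑ j ∈ Icc 1 n, u j * u (n + 1 - j) = coeff (n + 1) (mk u ^ 2) - 2 * u 0 * u (n + 1) := by
  rw [coeff_mk_sq, sum_range_succ, range_eq_Ico, sum_eq_sum_Ico_succ_bot n.succ_pos, zero_add,
    Nat.succ_eq_add_one, Ico_add_one_right_eq_Icc, Nat.sub_self, Nat.sub_zero]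
  ring

theorem X_mul_mk_sub_succ :
    X * mk (fun n ↦ u n - u (n + 1)) = (X - 1) * mk u + C (u 0) := by
  ext (_ | n) <;> simp [sub_mul]

theorem coeff_mk_sub_succ_mul_mk (n : ℕ) :
    coeff n (mk (fun n ↦ u n - u (n + 1)) * mk u) =
      coeff n (mk u ^ 2) - coeff (n + 1) (mk u ^ 2) + u 0 * u (n + 1) := by
  rw [← coeff_succ_X_mul, ← mul_assoc, X_mul_mk_sub_succ]
  simp [add_mul, sub_mul, mul_assoc, sq, coeff_C_mul]

theorem coeff_mk_sub_succ_sq (n : ℕ) :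
    coeff n (mk (fun n ↦ u n - u (n + 1)) ^ 2) =
      coeff n (mk u ^ 2) - 2 * coeff (n + 1) (mk u ^ 2) + coeff (n + 2) (mk u ^ 2)
        + 2 * u 0 * (u (n + 1) - u (n + 2)) := by
  have h_sq : ((X - 1) * mk u + C (u 0)) ^ 2 = X ^ 2 * mk u ^ 2 - C 2 * (X * mk u ^ 2) + mk u ^ 2
      + C (2 * u 0) * (X * mk u) - C (2 * u 0) * mk u + C (u 0 ^ 2) := by
    simp only [map_mul, map_pow, map_ofNat]
    ring
  rw [← coeff_X_pow_mul _ 2, ← mul_pow, X_mul_mk_sub_succ, h_sq]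
  simp only [map_add, map_sub, coeff_X_pow_mul, coeff_C_mul, coeff_succ_X_mul, coeff_mk, coeff_C,
    Nat.add_eq_zero_iff, OfNat.ofNat_ne_zero, and_false, if_false]
  ring

end CommRing

theorem coeff_mk_mul_mk_nonneg {R : Type*} [CommSemiring R] [PartialOrder R] [IsOrderedRing R]
    {f g : ℕ → R} {n : ℕ} (hf : ∀ i ≤ n, 0 ≤ f i) (hg : ∀ i ≤ n, 0 ≤ g i) :
    0 ≤ coeff n (mk f * mk g) := by
  rw [coeff_mul]
  refine sum_nonneg fun p hp ↦ ?_
  simpa only [coeff_mk] using mul_nonneg (hf _ (HasAntidiagonal.antidiagonal.fst_le hp))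
    (hg _ (HasAntidiagonal.antidiagonal.snd_le hp))

end PowerSeries

def MomentRecurrence (a b c : ℝ) (u : ℕ → ℝ) : Prop :=
  ∀ n : ℕ, (a + b + n + 2) * u (n + 1) =
    (a + n + 1) * u n + c * (coeff n (mk u ^ 2) - coeff (n + 1) (mk u ^ 2))

namespace MomentRecurrence

variable {a b c : ℝ} {u : ℕ → ℝ}

theorem of_convolution (hD : ∀ n : ℕ, 0 < 2 * c + a + b + n + 2) (hu0 : u 0 = 1)
    (hurec : ∀ k : ℕ, 1 ≤ k →
      u k = (1 / (2*c + a + b + (k : ℝ) + 1)) *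
        ((a + (k : ℝ)) * u (k - 1)
          + c * ∑ i ∈ Finset.range k, u i * u (k - 1 - i)
          - c * ∑ j ∈ Finset.Icc 1 (k - 1), u j * u (k - j))) :
    MomentRecurrence a b c u := fun n ↦ by
  have h := hurec (n + 1) n.succ_pos
  simp only [Nat.add_sub_cancel, ← coeff_mk_sq, sum_Icc_mul_eq_coeff_mk_sq, hu0] at h
  push_cast at h
  rw [one_div_mul_eq_div, eq_div_iff (by linarith [hD n])] at h
  linear_combination h

theorem apply_one (hrec : MomentRecurrence a b c u) (hu0 : u 0 = 1) :
    (2 * c + a + b + 2) * u 1 = a + 1 + c := by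
  have h := hrec 0
  simp only [coeff_mk_sq, sum_range_succ, sum_range_zero, hu0] at h
  push_cast at h
  linear_combination h

theorem sub_succ (hrec : MomentRecurrence a b c u) (hu0 : u 0 = 1) (n : ℕ) :
    (2 * c + a + b + n + 3) * (u (n + 1) - u (n + 2)) =
      (a + n + 1) * (u n - u (n + 1)) + c * coeff n (mk (fun n ↦ u n - u (n + 1)) ^ 2) := by
  have h := hrec (n + 1)
  push_cast at h
  rw [coeff_mk_sub_succ_sq, hu0]
  linear_combination hrec n - h

theorem apply_succ (hrec : MomentRecurrence a b c u) (hu0 : u 0 = 1) (n : ℕ) :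
    (a + b + c + n + 2) * u (n + 1) =
      (a + n + 1) * u n + c * coeff n (mk (fun n ↦ u n - u (n + 1)) * mk u) := by
  rw [coeff_mk_sub_succ_mul_mk, hu0]
  linear_combination hrec n

theorem antitone (hrec : MomentRecurrence a b c u) (hu0 : u 0 = 1) (ha : -1 ≤ a) (hb : -1 < b)
    (hc : 0 ≤ c) : Antitone u := by
  suffices h : ∀ n, 0 ≤ u n - u (n + 1) from antitone_nat_of_succ_le fun n ↦ sub_nonneg.1 (h n)
  intro n
  induction n using Nat.strong_induction_on with
  | _ n ih =>
  rcases n with _ | n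
  · have h_diff : (2 * c + a + b + 2) * (u 0 - u 1) = b + 1 + c := by
      rw [hu0]
      linear_combination -hrec.apply_one hu0
    refine (mul_nonneg_iff_of_pos_left (by linarith : 0 < 2 * c + a + b + 2)).1 ?_
    rw [h_diff]
    linarith
  · have hn : (0 : ℝ) ≤ n := n.cast_nonneg
    have hsq : 0 ≤ coeff n (mk (fun n ↦ u n - u (n + 1)) ^ 2) := by
      rw [sq]
      exact coeff_mk_mul_mk_nonneg (fun i hi ↦ ih i (by omega)) (fun i hi ↦ ih i (by omega))
    refine (mul_nonneg_iff_of_pos_left (by linarith : 0 < 2 * c + a + b + n + 3)).1 ?_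
    rw [hrec.sub_succ hu0 n]
    exact add_nonneg (mul_nonneg (by linarith) (ih n n.lt_succ_self)) (mul_nonneg hc hsq)

theorem pos (hrec : MomentRecurrence a b c u) (hu0 : u 0 = 1) (ha : -1 < a) (hb : -1 < b)
    (hc : 0 ≤ c) (n : ℕ) : 0 < u n := by
  induction n using Nat.strong_induction_on with
  | _ n ih =>
  rcases n with _ | n
  · rw [hu0]
    exact one_pos
  · have hn : (0 : ℝ) ≤ n := n.cast_nonneg
    have hanti := hrec.antitone hu0 ha.le hb hc
    have hconv : 0 ≤ coeff n (mk (fun n ↦ u n - u (n + 1)) * mk u) :=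
      coeff_mk_mul_mk_nonneg (fun i _ ↦ sub_nonneg.2 (hanti i.le_succ))
        (fun i hi ↦ (ih i (by omega)).le)
    refine (mul_pos_iff_of_pos_left (by linarith : 0 < a + b + c + n + 2)).1 ?_
    rw [hrec.apply_succ hu0 n]
    exact add_pos_of_pos_of_nonneg (mul_pos (by linarith) (ih n n.lt_succ_self))
      (mul_nonneg hc hconv)

end MomentRecurrence

/-- The sequence `(u_k)` of moments of the limiting measure `ν_{a,b,c}` satisfies
`0 < u_k ≤ 1` and is non-increasing. -/
theorem limiting_moments_bounds (a b c : ℝ) (ha : -1 < a) (hb : -1 < b) (hc : 0 ≤ c)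
    (u : ℕ → ℝ) (hu0 : u 0 = 1)
    (hurec : ∀ k : ℕ, 1 ≤ k →
      u k = (1 / (2*c + a + b + (k : ℝ) + 1)) *
        ((a + (k : ℝ)) * u (k - 1)
          + c * ∑ i ∈ Finset.range k, u i * u (k - 1 - i)
          - c * ∑ j ∈ Finset.Icc 1 (k - 1), u j * u (k - j))) :
    (∀ k : ℕ, 0 < u k ∧ u k ≤ 1) ∧ (∀ k l : ℕ, k ≤ l → u l ≤ u k) := by
  have hrec : MomentRecurrence a b c u :=
    .of_convolution (fun n ↦ by linarith [n.cast_nonneg (α := ℝ)]) hu0 hurec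
  have hanti := hrec.antitone hu0 ha.le hb hc
  exact ⟨fun k ↦ ⟨hrec.pos hu0 ha hb hc k, hu0 ▸ hanti k.zero_le⟩, fun _ _ h ↦ hanti h⟩
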